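/- arXiv:1307.5657 — 4 statements merged into one kernel-verified Lean document; each statement's English description precedes it below -/
import Mathlib

section
/- Let F be a real Banach space, E : F → F a continuous linear operator that is idempotent (E ∘ E = E), A : ℝ → F → F any map, γ ∈ ℝ, and T > 0. Suppose v : [0,T) → F is differentiable with v'(t) = E(A(t, v(t))) − γ(v(t) − E(v(t))) for all t ∈ [0,T), and the initial datum is an extension: E(v(0)) = v(0). Then v(t) = E(v(t)) for all t ∈ [0,T), and consequently v'(t) = E(A(t, v(t))) on [0,T); that is, v solves the constrained embedding system. -/
/-! The defect `w = v - E v` satisfies the linear equation `w' = -γ w`, because `1 - E`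
annihilates the range of `E`; since `w 0 = 0`, uniqueness for this scalar linear equation
(via the integrating factor `exp (γ t)`) forces `w ≡ 0`. -/

section

variable {F : Type*} [NormedAddCommGroup F] [NormedSpace ℝ F]

theorem Convex.eq_zero_of_hasDerivWithinAt_eq_smul {s : Set ℝ} (hs : Convex ℝ s)
    {w : ℝ → F} {c a : ℝ} (hw : ∀ t ∈ s, HasDerivWithinAt w (c • w t) s t)
    (ha : a ∈ s) (hwa : w a = 0) : ∀ t ∈ s, w t = 0 := by
  set u : ℝ → F := fun t => Real.exp (-c * t) • w t
  have hu : ∀ t ∈ s, HasDerivWithinAt u 0 s t := by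
    intro t ht
    have hexp : HasDerivWithinAt (fun t => Real.exp (-c * t)) (Real.exp (-c * t) * -c) s t :=
      ((hasDerivAt_id t).const_mul (-c)).exp.hasDerivWithinAt.congr_deriv (by simp)
    convert hexp.smul (hw t ht) using 1
    · rfl
    rw [smul_smul, ← add_smul, show Real.exp (-c * t) * c + Real.exp (-c * t) * -c = 0 by ring,
      zero_smul]
  intro t ht
  have hconst : ‖u t - u a‖ ≤ 0 * ‖t - a‖ :=
    hs.norm_image_sub_le_of_norm_hasDerivWithin_le hu (fun _ _ => norm_zero.le) ha ht
  have hut : u t = 0 := by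
    rwa [zero_mul, norm_le_zero_iff, sub_eq_zero, show u a = 0 by simp [u, hwa]] at hconst
  simpa [u, (Real.exp_pos _).ne'] using hut

theorem ContinuousLinearMap.map_sub_self_of_idempotent {E : F →L[ℝ] F}
    (hE : ∀ x : F, E (E x) = E x) (x : F) : E (x - E x) = 0 := by
  rw [map_sub, hE, sub_self]

theorem ContinuousLinearMap.hasDerivWithinAt_sub_self_of_idempotent {E : F →L[ℝ] F}
    (hE : ∀ x : F, E (E x) = E x) {v : ℝ → F} {y : F} {c : ℝ} {s : Set ℝ} {t : ℝ}
    (hv : HasDerivWithinAt v (E y - c • (v t - E (v t))) s t) :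
    HasDerivWithinAt (fun t => v t - E (v t)) (-c • (v t - E (v t))) s t := by
  have hEv := E.hasFDerivAt.comp_hasDerivWithinAt t hv
  rw [map_sub, map_smul, hE, E.map_sub_self_of_idempotent hE, smul_zero, sub_zero] at hEv
  convert hv.sub hEv using 1
  · rfl
  · module

end

theorem penalized_solves_constrained_general
    {F : Type*} [NormedAddCommGroup F] [NormedSpace ℝ F]
    (E : F →L[ℝ] F) (hE : ∀ x : F, E (E x) = E x)
    (A : ℝ → F → F) (γ : ℝ) (T : ℝ)
    (v : ℝ → F)
    (hderiv : ∀ t ∈ Set.Ico (0 : ℝ) T,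
      HasDerivWithinAt v (E (A t (v t)) - γ • (v t - E (v t)))
        (Set.Ico (0 : ℝ) T) t)
    (hinit : E (v 0) = v 0) :
    (∀ t ∈ Set.Ico (0 : ℝ) T, v t = E (v t)) ∧
    (∀ t ∈ Set.Ico (0 : ℝ) T,
      HasDerivWithinAt v (E (A t (v t))) (Set.Ico (0 : ℝ) T) t) := by
  have hdefect : ∀ t ∈ Set.Ico (0 : ℝ) T, v t - E (v t) = 0 := fun t ht =>
    (convex_Ico 0 T).eq_zero_of_hasDerivWithinAt_eq_smul
      (fun t ht => E.hasDerivWithinAt_sub_self_of_idempotent hE (hderiv t ht))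
      ⟨le_rfl, ht.1.trans_lt ht.2⟩ (by rw [hinit, sub_self]) t ht
  refine ⟨fun t ht => sub_eq_zero.mp (hdefect t ht), fun t ht => ?_⟩
  simpa [hdefect t ht] using hderiv t ht

/-- If `E` is idempotent and `v` solves the penalized equation
`v' = E(A(t,v)) - γ (v - E v)` on `[0,T)` with initial datum an extension,
`E(v 0) = v 0`, then `v t = E (v t)` for all `t ∈ [0,T)` and consequently
`v' = E(A(t,v))` on `[0,T)`; that is, `v` solves the constrained system. -/
theorem penalized_solves_constrained
    {F : Type*} [NormedAddCommGroup F] [NormedSpace ℝ F] [CompleteSpace F]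
    (E : F →L[ℝ] F) (hE : ∀ x : F, E (E x) = E x)
    (A : ℝ → F → F) (γ : ℝ) (T : ℝ) (hT : 0 < T)
    (v : ℝ → F)
    (hderiv : ∀ t ∈ Set.Ico (0 : ℝ) T,
      HasDerivWithinAt v (E (A t (v t)) - γ • (v t - E (v t)))
        (Set.Ico (0 : ℝ) T) t)
    (hinit : E (v 0) = v 0) :
    (∀ t ∈ Set.Ico (0 : ℝ) T, v t = E (v t)) ∧
    (∀ t ∈ Set.Ico (0 : ℝ) T,
      HasDerivWithinAt v (E (A t (v t))) (Set.Ico (0 : ℝ) T) t) :=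
  penalized_solves_constrained_general E hE A γ T v hderiv hinit
end

section
/- Let F be a real vector space, E : F → F a linear idempotent operator (E ∘ E = E), L : F → F any map, f ∈ F, and γ ∈ ℝ with γ ≠ 0. Then an element v ∈ F satisfies the system E(L(v)) = E(f) and v = E(v) if and only if it satisfies the single equation E(L(v)) − γ(v − E(v)) = E(f). -/
/-- For a linear idempotent operator `E`, any map `L`, and `γ ≠ 0`, an element
`v` satisfies the system `E(L v) = E f`, `v = E v` if and only if it satisfies
the single penalized equation `E(L v) - γ (v - E v) = E f`. -/
theorem poisson_system_iff_penalized
    {F : Type*} [AddCommGroup F] [Module ℝ F]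
    (E : F →ₗ[ℝ] F) (hE : ∀ x : F, E (E x) = E x)
    (L : F → F) (f : F) (γ : ℝ) (hγ : γ ≠ 0) (v : F) :
    (E (L v) = E f ∧ v = E v) ↔ E (L v) - γ • (v - E v) = E f := by
  constructor
  · rintro ⟨h1, h2⟩
    rw [h1, ← h2, sub_self, smul_zero, sub_zero]
  · intro h
    have h2 : E (E (L v) - γ • (v - E v)) = E (E f) := by rw [h]
    simp only [map_sub, map_smul, hE] at h2
    rw [sub_self, smul_zero, sub_zero] at h2
    refine ⟨h2, ?_⟩
    rw [h2] at h
    have : γ • (v - E v) = 0 := sub_eq_self.mp h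
    have hv : v - E v = 0 := by
      rcases smul_eq_zero.mp this with h' | h'
      · exact absurd h' hγ
      · exact h'
    exact (sub_eq_zero.mp hv)
end

section
/- Let B be a set, S ⊆ B, cp : B → B a retraction of B onto S, and E the associated closest point extension operator on functions B → ℝ. Let A : (B → ℝ) → (B → ℝ) be any map, f : B → ℝ, and γ ∈ ℝ with γ ≠ 0. Then a function v : B → ℝ satisfies E(A(v)) = E(f) and v = E(v) if and only if it satisfies the single equation E(A(v)) − γ(v − E(v)) = E(f). -/
/-- The closest point extension operator: `(E v)(x) = v (cp x)`. -/
def cpExt {B : Type*} (cp : B → B) (v : B → ℝ) : B → ℝ := fun x => v (cp x)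

/-- For the closest point extension operator `E`, any map `A` on functions,
`f : B → ℝ` and `γ ≠ 0`, a function `v` satisfies the system
`E(A v) = E f`, `v = E v` if and only if it satisfies the single penalized
equation `E(A v) - γ (v - E v) = E f`. -/
theorem cp_poisson_system_iff_penalized
    {B : Type*} (S : Set B) (cp : B → B)
    (hmem : ∀ x : B, cp x ∈ S) (hretr : ∀ y ∈ S, cp y = y)
    (A : (B → ℝ) → (B → ℝ)) (f : B → ℝ) (γ : ℝ) (hγ : γ ≠ 0) (v : B → ℝ) :
    (cpExt cp (A v) = cpExt cp f ∧ v = cpExt cp v) ↔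
      cpExt cp (A v) - γ • (v - cpExt cp v) = cpExt cp f := by
  have hcc : ∀ x, cp (cp x) = cp x := fun x => hretr _ (hmem x)
  constructor
  · rintro ⟨h1, h2⟩
    rw [← h2]
    simp [h1]
  · intro h
    have h2 : v = cpExt cp v := by
      funext x
      have hx := congrFun h (cp x)
      simp [cpExt, hcc, Pi.sub_apply] at hx
      have := congrFun h x
      simp [cpExt, Pi.sub_apply] at this
      rw [hx] at this
      have : γ * (v x - v (cp x)) = 0 := by linarith
      rcases mul_eq_zero.mp this with h' | h'
      · exact absurd h' hγ
      · simpa [cpExt] using by linarith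
    have h1 : cpExt cp (A v) = cpExt cp f := by
      rw [← h, ← h2]
      simp
    exact ⟨h1, h2⟩
end

section
/- Let F be a real vector space, E : F → F and L : F → F linear maps, Δt ∈ ℝ with Δt ≠ 0, and set γ = 1/Δt. Then for every v ∈ F, one forward Euler step of the penalized scheme coincides with extension applied after an unpenalized forward Euler step: v + Δt·(E(L v) − γ(v − E v)) = E(v + Δt·(L v)). Hence with the choice γ = 1/Δt the penalized method-of-lines scheme for the surface heat equation reproduces the two-step explicit closest point method of Ruuth and Merriman. -/
/-- With the choice `γ = 1/Δt`, one forward Euler step of the penalized scheme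
coincides with the Ruuth–Merriman two-step scheme (an unpenalized forward
Euler step followed by extension):
`v + Δt (E(L v) - γ (v - E v)) = E (v + Δt L v)`. -/
theorem penalized_equals_ruuth_merriman
    {F : Type*} [AddCommGroup F] [Module ℝ F]
    (E : F →ₗ[ℝ] F) (L : F →ₗ[ℝ] F)
    (Δt : ℝ) (hΔt : Δt ≠ 0) (γ : ℝ) (hγ : γ = 1 / Δt) :
    ∀ v : F, v + Δt • (E (L v) - γ • (v - E v)) = E (v + Δt • L v) := by
  intro v
  subst hγ
  rw [map_add, map_smul, smul_sub, smul_smul, mul_one_div_cancel hΔt, one_smul]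
  abel
end
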